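/- Let C be a real symmetric d×d matrix, D = (4I + C²)^{-1}, and Δ the 2d×2d block matrix [[2D, DC],[DC, I-2D]]. Then |S_φ(N_C φ)(x,ξ)| = det(4I + C²)^{-1/4} exp(-π Δ(ξ,x)·(ξ,x)) for all x,ξ ∈ ℝ^d, where φ(t) = e^{-π t·t} and N_C f(t) = e^{-iπ C t·t} f(t). -/

import Mathlib

/-!
Write `C = U diag(μ) Uᵀ` with `U` orthogonal. The substitution `t = U s` preserves Lebesgue
measure, and in the coordinates `s`, `y = Uᵀ x`, `η = Uᵀ ξ` the integrand factors into `d`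
one-dimensional Gaussians `exp(-π(2 + iμₖ) s² + 2π(yₖ - iηₖ) s - π yₖ²)`. The Gaussian integral
gives each factor modulus `(4 + μₖ²)^(-1/4) exp(-π qₖ)` with `qₖ` quadratic in `(ηₖ, yₖ)`, and
the same rotation turns `det(4I + C²)` into `∏ (4 + μₖ²)` and the quadratic form of `Δ` into `∑ qₖ`.
-/

open MeasureTheory Matrix Complex Real Unitary

theorem norm_cpow_half_div_two_add_mul_I (c : ℝ) :
    ‖(π / (π * (2 + c * I))) ^ (1 / 2 : ℂ)‖ = (4 + c ^ 2) ^ (-(1 / 4 : ℝ)) := by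
  have hnorm : ‖(2 + c * I : ℂ)‖ = √(4 + c ^ 2) := by
    simpa [show (2 : ℝ) ^ 2 = 4 by norm_num] using norm_add_mul_I 2 c
  rw [div_mul_cancel_left₀ (ofReal_ne_zero.mpr pi_ne_zero),
    show (1 / 2 : ℂ) = ((1 / 2 : ℝ) : ℂ) by norm_num, norm_cpow_real, norm_inv, hnorm,
    sqrt_eq_rpow, ← rpow_neg (by positivity), ← rpow_mul (by positivity)]
  norm_num

theorem re_chirp_exponent (c X Ξ : ℝ) :
    (-π * X ^ 2 - (2 * π * (X - Ξ * I)) ^ 2 / (4 * -(π * (2 + c * I)))).re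
      = -π * (2 * (4 + c ^ 2)⁻¹ * Ξ ^ 2 + 2 * ((4 + c ^ 2)⁻¹ * c) * Ξ * X
          + (1 - 2 * (4 + c ^ 2)⁻¹) * X ^ 2) := by
  have hc : (4 + c ^ 2 : ℝ) ≠ 0 := by positivity
  simp only [sq, neg_mul, mul_neg, sub_re, neg_re, mul_re, ofReal_re, ofReal_im, mul_zero,
    sub_zero, mul_im, zero_mul, add_zero, div_re, re_ofNat, im_ofNat, I_re, I_im, mul_one,
    sub_self, sub_im, zero_sub, neg_zero, neg_neg, add_re, add_im, zero_add, normSq,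
    MonoidWithZeroHom.coe_mk, ZeroHom.coe_mk, neg_im]
  field_simp
  ring

theorem norm_integral_cexp_chirp (c X Ξ : ℝ) :
    ‖∫ s : ℝ, cexp (-(π * (2 + c * I)) * s ^ 2 + 2 * π * (X - Ξ * I) * s + -π * X ^ 2)‖
      = (4 + c ^ 2) ^ (-(1 / 4 : ℝ)) * rexp (-π * (2 * (4 + c ^ 2)⁻¹ * Ξ ^ 2
          + 2 * ((4 + c ^ 2)⁻¹ * c) * Ξ * X + (1 - 2 * (4 + c ^ 2)⁻¹) * X ^ 2)) := by
  have hb : (-(π * (2 + c * I))).re < 0 := by simp [pi_pos]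
  rw [integral_cexp_quadratic hb, norm_mul, norm_exp, neg_neg,
    norm_cpow_half_div_two_add_mul_I, re_chirp_exponent]

variable {ι : Type*} [Fintype ι]

theorem norm_integral_prod_cexp_chirp (μ x ξ : ι → ℝ) :
    ‖∫ t : ι → ℝ, ∏ i,
        cexp (-(π * (2 + μ i * I)) * t i ^ 2 + 2 * π * (x i - ξ i * I) * t i + -π * x i ^ 2)‖
      = ∏ i, (4 + μ i ^ 2) ^ (-(1 / 4 : ℝ)) * rexp (-π * (2 * (4 + μ i ^ 2)⁻¹ * ξ i ^ 2
          + 2 * ((4 + μ i ^ 2)⁻¹ * μ i) * ξ i * x i + (1 - 2 * (4 + μ i ^ 2)⁻¹) * x i ^ 2)) := by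
  rw [integral_fintype_prod_volume_eq_prod (fun i (s : ℝ) ↦
    cexp (-(π * (2 + μ i * I)) * s ^ 2 + 2 * π * (x i - ξ i * I) * s + -π * x i ^ 2)), norm_prod]
  exact Finset.prod_congr rfl fun i _ ↦ norm_integral_cexp_chirp _ _ _

theorem sum_sum_mul_mul_eq_dotProduct_mulVec (M : Matrix ι ι ℝ) (v : ι → ℝ) :
    ∑ i, ∑ j, M i j * v i * v j = v ⬝ᵥ M *ᵥ v := by
  simp only [dotProduct, mulVec, Finset.mul_sum]
  exact Finset.sum_congr rfl fun i _ ↦ Finset.sum_congr rfl fun j _ ↦ by ring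

noncomputable def stftChirpExponent (C : Matrix ι ι ℝ) (x ξ t : ι → ℝ) : ℂ :=
  ((-π * (t ⬝ᵥ t + (t - x) ⬝ᵥ (t - x)) : ℝ) : ℂ) - ((π * (t ⬝ᵥ C *ᵥ t + 2 * (t ⬝ᵥ ξ)) : ℝ) : ℂ) * I

theorem stft_integrand_eq_cexp (C : Matrix ι ι ℝ) (x ξ t : ι → ℝ) :
    cexp (-(π * ∑ i, ∑ j, C i j * t i * t j : ℝ) * I) * cexp ((-(π * ∑ i, t i ^ 2) : ℝ) : ℂ) *
        (starRingEnd ℂ) (cexp ((-(π * ∑ i, (t i - x i) ^ 2) : ℝ) : ℂ)) *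
        cexp (-(2 * π * ∑ i, t i * ξ i : ℝ) * I)
      = cexp (stftChirpExponent C x ξ t) := by
  rw [← Complex.exp_conj, conj_ofReal, ← Complex.exp_add, ← Complex.exp_add, ← Complex.exp_add,
    stftChirpExponent, sum_sum_mul_mul_eq_dotProduct_mulVec]
  simp only [dotProduct, Pi.sub_apply, sq]
  push_cast
  ring_nf

variable [DecidableEq ι]

theorem stftChirpExponent_diagonal (μ x ξ t : ι → ℝ) :
    stftChirpExponent (diagonal μ) x ξ t
      = ∑ i, (-(π * (2 + μ i * I)) * t i ^ 2 + 2 * π * (x i - ξ i * I) * t i + -π * x i ^ 2) := by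
  simp only [stftChirpExponent, dotProduct, mulVec_diagonal, Pi.sub_apply]
  push_cast
  simp only [Finset.mul_sum, ← Finset.sum_add_distrib, ← Finset.sum_sub_distrib, Finset.sum_mul]
  exact Finset.sum_congr rfl fun i _ ↦ by ring

theorem sumElim_dotProduct_fromBlocks_diagonal_mulVec (a b c η y : ι → ℝ) :
    (η ⊕ᵥ y) ⬝ᵥ fromBlocks (diagonal a) (diagonal b) (diagonal b) (diagonal c) *ᵥ (η ⊕ᵥ y)
      = ∑ i, (a i * η i ^ 2 + 2 * b i * η i * y i + c i * y i ^ 2) := by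
  rw [fromBlocks_mulVec, sumElim_dotProduct_sumElim]
  simp only [Sum.elim_comp_inl, Sum.elim_comp_inr, dotProduct, Pi.add_apply, mulVec_diagonal,
    ← Finset.sum_add_distrib]
  exact Finset.sum_congr rfl fun i _ ↦ by ring

theorem Matrix.IsSymm.exists_conjStarAlgAut_diagonal {C : Matrix ι ι ℝ} (hC : C.IsSymm) :
    ∃ (u : orthogonalGroup ι ℝ) (μ : ι → ℝ), C = conjStarAlgAut ℝ _ u (diagonal μ) := by
  have hH : C.IsHermitian := by
    rwa [IsHermitian, conjTranspose_eq_transpose_of_trivial]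
  exact ⟨hH.eigenvectorUnitary, hH.eigenvalues, by simpa using hH.spectral_theorem⟩

section Orthogonal

variable (u : orthogonalGroup ι ℝ)

theorem abs_det_orthogonalGroup : |(u : Matrix ι ι ℝ).det| = 1 := by
  have h := congrArg det ((mem_orthogonalGroup_iff ι ℝ).mp u.2)
  rw [det_mul, det_transpose, det_one] at h
  rcases mul_self_eq_one_iff.mp h with h | h <;> simp [h]

theorem integral_comp_orthogonalGroup_mulVec {E : Type*} [NormedAddCommGroup E]
    [NormedSpace ℝ E] (f : (ι → ℝ) → E) :
    ∫ s, f ((u : Matrix ι ι ℝ) *ᵥ s) = ∫ t, f t := by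
  have hmap : Measure.map (toLin' (u : Matrix ι ι ℝ)) volume = volume := by
    rw [Real.map_matrix_volume_pi_eq_smul_volume_pi
        (by simp [← abs_pos, abs_det_orthogonalGroup]),
      abs_inv, abs_det_orthogonalGroup]
    simp
  conv_rhs => rw [← hmap]
  exact ((UnitaryGroup.toLinearEquiv u).toContinuousLinearEquiv.toHomeomorph.measurableEmbedding
    |>.integral_map f).symm

theorem det_conjStarAlgAut (A : Matrix ι ι ℝ) : (conjStarAlgAut ℝ _ u A).det = A.det := by
  rw [conjStarAlgAut_apply, det_mul_right_comm, mul_star_self_of_mem u.2, one_mul]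

theorem conjStarAlgAut_nonsing_inv (A : Matrix ι ι ℝ) :
    conjStarAlgAut ℝ _ u A⁻¹ = (conjStarAlgAut ℝ _ u A)⁻¹ := by
  have hinv : (u : Matrix ι ι ℝ)⁻¹ = star (u : Matrix ι ι ℝ) :=
    inv_eq_left_inv (star_mul_self_of_mem u.2)
  have hinv' : (star (u : Matrix ι ι ℝ))⁻¹ = u := inv_eq_left_inv (mul_star_self_of_mem u.2)
  rw [conjStarAlgAut_apply, conjStarAlgAut_apply, Matrix.mul_inv_rev, Matrix.mul_inv_rev, hinv,
    hinv', Matrix.mul_assoc]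

theorem smul_one_add_sq_conjStarAlgAut_diagonal (a : ℝ) (μ : ι → ℝ) :
    a • 1 + conjStarAlgAut ℝ _ u (diagonal μ) ^ 2
      = conjStarAlgAut ℝ _ u (diagonal fun i ↦ a + μ i ^ 2) := by
  rw [← map_pow, ← map_one (conjStarAlgAut ℝ _ u), ← map_smul, ← map_add, diagonal_pow,
    smul_one_eq_diagonal, diagonal_add]
  rfl

theorem inv_smul_one_add_sq_conjStarAlgAut_diagonal {a : ℝ} (ha : 0 < a) (μ : ι → ℝ) :
    (a • 1 + conjStarAlgAut ℝ _ u (diagonal μ) ^ 2)⁻¹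
      = conjStarAlgAut ℝ _ u (diagonal fun i ↦ (a + μ i ^ 2)⁻¹) := by
  rw [smul_one_add_sq_conjStarAlgAut_diagonal, ← conjStarAlgAut_nonsing_inv]
  congr 1
  refine inv_eq_left_inv ?_
  rw [diagonal_mul_diagonal, ← diagonal_one]
  exact congrArg diagonal (funext fun i ↦ inv_mul_cancel₀ (by positivity))

theorem mulVec_dotProduct_conjStarAlgAut_mulVec (A : Matrix ι ι ℝ) (v w : ι → ℝ) :
    ((u : Matrix ι ι ℝ) *ᵥ v) ⬝ᵥ conjStarAlgAut ℝ _ u A *ᵥ ((u : Matrix ι ι ℝ) *ᵥ w)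
      = v ⬝ᵥ A *ᵥ w := by
  have htr : (u : Matrix ι ι ℝ)ᵀ = star (u : Matrix ι ι ℝ) := by
    rw [star_eq_conjTranspose, conjTranspose_eq_transpose_of_trivial]
  rw [← vecMul_transpose, ← dotProduct_mulVec, mulVec_mulVec, mulVec_mulVec, htr,
    conjStarAlgAut_apply]
  simp only [← Matrix.mul_assoc, star_mul_self_of_mem u.2, one_mul]
  simp only [Matrix.mul_assoc, star_mul_self_of_mem u.2, mul_one]

theorem mulVec_dotProduct_mulVec (v w : ι → ℝ) :
    ((u : Matrix ι ι ℝ) *ᵥ v) ⬝ᵥ ((u : Matrix ι ι ℝ) *ᵥ w) = v ⬝ᵥ w := by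
  simpa using mulVec_dotProduct_conjStarAlgAut_mulVec u 1 v w

theorem sumElim_dotProduct_fromBlocks_conjStarAlgAut_mulVec (P Q R S : Matrix ι ι ℝ)
    (η y : ι → ℝ) :
    ((u : Matrix ι ι ℝ) *ᵥ η ⊕ᵥ (u : Matrix ι ι ℝ) *ᵥ y) ⬝ᵥ
        fromBlocks (conjStarAlgAut ℝ _ u P) (conjStarAlgAut ℝ _ u Q) (conjStarAlgAut ℝ _ u R)
          (conjStarAlgAut ℝ _ u S) *ᵥ ((u : Matrix ι ι ℝ) *ᵥ η ⊕ᵥ (u : Matrix ι ι ℝ) *ᵥ y)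
      = (η ⊕ᵥ y) ⬝ᵥ fromBlocks P Q R S *ᵥ (η ⊕ᵥ y) := by
  simp only [fromBlocks_mulVec, sumElim_dotProduct_sumElim, Sum.elim_comp_inl, Sum.elim_comp_inr,
    dotProduct_add, mulVec_dotProduct_conjStarAlgAut_mulVec]

theorem stftChirpExponent_conjStarAlgAut (A : Matrix ι ι ℝ) (x ξ t : ι → ℝ) :
    stftChirpExponent (conjStarAlgAut ℝ _ u A) ((u : Matrix ι ι ℝ) *ᵥ x)
        ((u : Matrix ι ι ℝ) *ᵥ ξ) ((u : Matrix ι ι ℝ) *ᵥ t) = stftChirpExponent A x ξ t := by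
  rw [stftChirpExponent, stftChirpExponent, ← mulVec_sub, mulVec_dotProduct_conjStarAlgAut_mulVec,
    mulVec_dotProduct_mulVec, mulVec_dotProduct_mulVec, mulVec_dotProduct_mulVec]

end Orthogonal

/-- Let `C` be a real symmetric `d×d` matrix, `D = (4I + C²)⁻¹` and
`Δ = [[2D, DC],[DC, I-2D]]`.  Then the short-time Fourier transform of the chirped
Gaussian `N_C φ(t) = e^{-iπ Ct·t} e^{-π t·t}` with Gaussian window satisfies
`|S_φ(N_C φ)(x,ξ)| = det(4I+C²)^{-1/4} exp(-π Δ(ξ,x)·(ξ,x))`. -/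
theorem stft_matrix_chirp_abs (d : ℕ) (C : Matrix (Fin d) (Fin d) ℝ) (hC : C.IsSymm)
    (D : Matrix (Fin d) (Fin d) ℝ)
    (hD : D = ((4 : ℝ) • (1 : Matrix (Fin d) (Fin d) ℝ) + C ^ 2)⁻¹)
    (Δ : Matrix (Fin d ⊕ Fin d) (Fin d ⊕ Fin d) ℝ)
    (hΔ : Δ = Matrix.fromBlocks ((2 : ℝ) • D) (D * C) (D * C)
        (1 - (2 : ℝ) • D))
    (x ξ : Fin d → ℝ) :
    ‖∫ t : Fin d → ℝ,
        (Complex.exp (-(Real.pi * ∑ i, ∑ j, C i j * t i * t j : ℝ) * Complex.I) *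
            Complex.exp ((-(Real.pi * ∑ i, t i ^ 2) : ℝ) : ℂ)) *
          (starRingEnd ℂ) (Complex.exp ((-(Real.pi * ∑ i, (t i - x i) ^ 2) : ℝ) : ℂ)) *
          Complex.exp (-(2 * Real.pi * ∑ i, t i * ξ i : ℝ) * Complex.I)‖
      = ((4 : ℝ) • (1 : Matrix (Fin d) (Fin d) ℝ) + C ^ 2).det ^ (-(1 / 4 : ℝ)) *
          Real.exp (-Real.pi *
            ∑ i, ∑ j, Δ i j * (Sum.elim ξ x i) * (Sum.elim ξ x j)) := by
  obtain ⟨u, μ, rfl⟩ := hC.exists_conjStarAlgAut_diagonal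
  have hu := mul_star_self_of_mem u.2
  obtain ⟨y, rfl⟩ : ∃ y, x = (u : Matrix (Fin d) (Fin d) ℝ) *ᵥ y :=
    ⟨star (u : Matrix (Fin d) (Fin d) ℝ) *ᵥ x, by rw [mulVec_mulVec, hu, one_mulVec]⟩
  obtain ⟨η, rfl⟩ : ∃ η, ξ = (u : Matrix (Fin d) (Fin d) ℝ) *ᵥ η :=
    ⟨star (u : Matrix (Fin d) (Fin d) ℝ) *ᵥ ξ, by rw [mulVec_mulVec, hu, one_mulVec]⟩
  have hΔ' : Δ = fromBlocks (conjStarAlgAut ℝ _ u (diagonal fun i ↦ 2 * (4 + μ i ^ 2)⁻¹))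
      (conjStarAlgAut ℝ _ u (diagonal fun i ↦ (4 + μ i ^ 2)⁻¹ * μ i))
      (conjStarAlgAut ℝ _ u (diagonal fun i ↦ (4 + μ i ^ 2)⁻¹ * μ i))
      (conjStarAlgAut ℝ _ u (diagonal fun i ↦ 1 - 2 * (4 + μ i ^ 2)⁻¹)) := by
    rw [hΔ, hD, inv_smul_one_add_sq_conjStarAlgAut_diagonal u four_pos, ← map_smul, ← map_mul,
      ← map_one (conjStarAlgAut ℝ _ u), ← map_sub]
    simp only [← diagonal_smul, diagonal_mul_diagonal, ← diagonal_one, ← diagonal_sub]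
    rfl
  simp_rw [stft_integrand_eq_cexp]
  rw [← integral_comp_orthogonalGroup_mulVec u]
  simp_rw [stftChirpExponent_conjStarAlgAut, stftChirpExponent_diagonal, Complex.exp_sum]
  rw [norm_integral_prod_cexp_chirp, sum_sum_mul_mul_eq_dotProduct_mulVec, hΔ',
    sumElim_dotProduct_fromBlocks_conjStarAlgAut_mulVec,
    sumElim_dotProduct_fromBlocks_diagonal_mulVec, smul_one_add_sq_conjStarAlgAut_diagonal,
    det_conjStarAlgAut, det_diagonal, ← Real.finsetProd_rpow _ _ (fun i _ ↦ by positivity),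
    Finset.mul_sum, Real.exp_sum, Finset.prod_mul_distrib]
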